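/- L'Huilier formula: for any a,b,c ∈ ℍ, setting L₁ := d(a,b), L₂ := d(b,c), L₃ := d(c,a), S := L₁+L₂+L₃, D₁ := −L₁+L₂+L₃, D₂ := L₁−L₂+L₃, D₃ := L₁+L₂−L₃, the absolute value of the signed triangle area satisfies |2·arctan([a,b,c] / (⟨a,b⟩ + ⟨b,c⟩ + ⟨c,a⟩ + 1))| = 4·arctan √( tanh(S/4)·tanh(D₁/4)·tanh(D₂/4)·tanh(D₃/4) ). -/
import Mathlib


open Real Finset

noncomputable section

/-- Points of `ℝ³`. -/
abbrev V3 : Type := Fin 3 → ℝ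

/-- The pseudo-Euclidean scalar product `⟨x,y⟩ = x₀y₀ − x₁y₁ − x₂y₂`. -/
def pscal (x y : V3) : ℝ := x 0 * y 0 - x 1 * y 1 - x 2 * y 2

/-- The hyperboloid model `ℍ` of the hyperbolic plane. -/
def Hyp : Set V3 := {x | pscal x x = 1 ∧ 0 < x 0}

/-- Inverse hyperbolic cosine. -/
def arcoshR (x : ℝ) : ℝ := Real.log (x + Real.sqrt (x ^ 2 - 1))

/-- Hyperbolic distance `d(a,b) = arcosh ⟨a,b⟩`. -/
def dH (a b : V3) : ℝ := arcoshR (pscal a b)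

/-- Determinant of the 3×3 matrix with columns `a`, `b`, `c`. -/
def det3 (a b c : V3) : ℝ :=
  a 0 * (b 1 * c 2 - b 2 * c 1) - b 0 * (a 1 * c 2 - a 2 * c 1) + c 0 * (a 1 * b 2 - a 2 * b 1)

/-- `S_ab = sinh(d(a,b)/2)`. -/
def SS (a b : V3) : ℝ := Real.sinh (dH a b / 2)

/-- Signed area of the triangle `a b c`. -/
def triArea (a b c : V3) : ℝ :=
  2 * Real.arctan (det3 a b c / (pscal a b + pscal b c + pscal c a + 1))

/-- Signed area of the `n`-gon with vertices `z 1, …, z n`. -/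
def polyArea (n : ℕ) (z : ℕ → V3) : ℝ :=
  ∑ k ∈ Finset.Ico 2 n, triArea (z 1) (z k) (z (k + 1))

/-- Cyclic successor on `{1, …, n}`. -/
def nxt (n k : ℕ) : ℕ := k % n + 1

/-- Oriented convexity of the `n`-gon `z 1, …, z n`. -/
def OrientedConvex (n : ℕ) (z : ℕ → V3) : Prop :=
  ∀ k ∈ Finset.Icc 1 n, ∀ j ∈ Finset.Icc 1 n,
    j ≠ k → j ≠ nxt n k → 0 < det3 (z k) (z (nxt n k)) (z j)

/-- A set of points lies in a common 2-dimensional linear subspace of `ℝ³`. -/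
def Collin (s : Set V3) : Prop :=
  ∃ W : Submodule ℝ V3, Module.finrank ℝ W = 2 ∧ ∀ x ∈ s, x ∈ W

/-- A set of points lies in a common affine plane of `ℝ³` not containing the origin. -/
def Cocyc (s : Set V3) : Prop :=
  ∃ u : V3, ∃ p : ℝ, u ≠ 0 ∧ p ≠ 0 ∧ ∀ x ∈ s, pscal u x = p

lemma gram_identity (a b c : V3) :
    det3 a b c ^ 2 =
      pscal a a * pscal b b * pscal c c + 2 * pscal a b * pscal b c * pscal c a
        - pscal a a * pscal b c ^ 2 - pscal b b * pscal c a ^ 2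
        - pscal c c * pscal a b ^ 2 := by
  unfold det3 pscal; ring

lemma pscal_ge_one {a b : V3} (ha : a ∈ Hyp) (hb : b ∈ Hyp) : 1 ≤ pscal a b := by
  obtain ⟨ha1, ha0⟩ := ha; obtain ⟨hb1, hb0⟩ := hb
  unfold pscal at *
  nlinarith [sq_nonneg (a 1 - b 1), sq_nonneg (a 2 - b 2),
    sq_nonneg (a 1 * b 2 - a 2 * b 1), mul_pos ha0 hb0, sq_nonneg (a 0 - b 0),
    sq_nonneg (a 0 * b 0 - 1), sq_nonneg (a 0 * b 0 + 1)]

lemma cosh_arcoshR {x : ℝ} (hx : 1 ≤ x) : Real.cosh (arcoshR x) = x := by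
  have hx2 : (0:ℝ) ≤ x ^ 2 - 1 := by nlinarith
  have hs : Real.sqrt (x ^ 2 - 1) ^ 2 = x ^ 2 - 1 := Real.sq_sqrt hx2
  have hs0 : 0 ≤ Real.sqrt (x ^ 2 - 1) := Real.sqrt_nonneg _
  have hy : 0 < x + Real.sqrt (x ^ 2 - 1) := by nlinarith
  have hinv : (x + Real.sqrt (x ^ 2 - 1))⁻¹ = x - Real.sqrt (x ^ 2 - 1) :=
    inv_eq_of_mul_eq_one_right (by nlinarith)
  rw [arcoshR, Real.cosh_eq, Real.exp_neg, Real.exp_log hy, hinv]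
  ring

lemma tanh_eq_exp (t : ℝ) :
    Real.tanh t = (Real.exp t ^ 2 - 1) / (Real.exp t ^ 2 + 1) := by
  have h := Real.exp_pos t
  rw [Real.tanh_eq_sinh_div_cosh, Real.sinh_eq, Real.cosh_eq, Real.exp_neg]
  rw [div_eq_div_iff (by positivity) (by positivity)]
  field_simp

lemma abs_arctan (w : ℝ) : |Real.arctan w| = Real.arctan |w| := by
  rcases le_or_gt 0 w with h | h
  · rw [abs_of_nonneg h, abs_of_nonneg]
    rw [← Real.arctan_zero]
    exact Real.arctan_strictMono.monotone h
  · have h2 : Real.arctan w < 0 := by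
      rw [← Real.arctan_zero]; exact Real.arctan_strictMono h
    rw [abs_of_neg h, abs_of_neg h2, ← Real.arctan_neg]

lemma master (e1 e2 e3 : ℝ) (h1 : 0 < e1) (h2 : 0 < e2) (h3 : 0 < e3)
    (x y z : ℝ)
    (hx : x = (e1 ^ 2 + (e1 ^ 2)⁻¹) / 2)
    (hy : y = (e2 ^ 2 + (e2 ^ 2)⁻¹) / 2)
    (hz : z = (e3 ^ 2 + (e3 ^ 2)⁻¹) / 2) :
    4 * ((e1 * e2 * e3 - 1) * (e2 * e3 - e1) * (e1 * e3 - e2) * (e1 * e2 - e3)) *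
        ((e1 * e2 * e3 + 1) * (e2 * e3 + e1) * (e1 * e3 + e2) * (e1 * e2 + e3)) *
        (x + y + z + 1) ^ 2 =
      (1 + 2 * x * y * z - x ^ 2 - y ^ 2 - z ^ 2) *
        (((e1 * e2 * e3 + 1) * (e2 * e3 + e1) * (e1 * e3 + e2) * (e1 * e2 + e3)) -
         ((e1 * e2 * e3 - 1) * (e2 * e3 - e1) * (e1 * e3 - e2) * (e1 * e2 - e3))) ^ 2 := by
  subst hx hy hz
  have h1' := h1.ne'
  have h2' := h2.ne'
  have h3' := h3.ne'
  field_simp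
  ring


set_option maxHeartbeats 2000000 in
/-- L'Huilier's formula for the absolute value of the signed area of a hyperbolic
triangle in terms of its sidelengths. -/
theorem lhuilier (a b c : V3) (ha : a ∈ Hyp) (hb : b ∈ Hyp) (hc : c ∈ Hyp) :
    |triArea a b c| =
      4 * Real.arctan (Real.sqrt
        (Real.tanh ((dH a b + dH b c + dH c a) / 4) *
         Real.tanh ((-dH a b + dH b c + dH c a) / 4) *
         Real.tanh ((dH a b - dH b c + dH c a) / 4) *
         Real.tanh ((dH a b + dH b c - dH c a) / 4))) := by
  have hx : 1 ≤ pscal a b := pscal_ge_one ha hb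
  have hy : 1 ≤ pscal b c := pscal_ge_one hb hc
  have hz : 1 ≤ pscal c a := pscal_ge_one hc ha
  set x := pscal a b with hxd
  set y := pscal b c with hyd
  set z := pscal c a with hzd
  set D := det3 a b c with hDd
  set e1 := Real.exp (dH a b / 2) with he1d
  set e2 := Real.exp (dH b c / 2) with he2d
  set e3 := Real.exp (dH c a / 2) with he3d
  have he1 : 0 < e1 := Real.exp_pos _
  have he2 : 0 < e2 := Real.exp_pos _
  have he3 : 0 < e3 := Real.exp_pos _
  have hQ : (0:ℝ) < x + y + z + 1 := by linarith
  -- cosh relations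
  have hex : x = (e1 ^ 2 + (e1 ^ 2)⁻¹) / 2 := by
    have h := cosh_arcoshR hx
    rw [Real.cosh_eq, Real.exp_neg] at h
    have hsq : e1 ^ 2 = Real.exp (arcoshR x) := by
      rw [he1d, show dH a b = arcoshR x from rfl, sq, ← Real.exp_add]
      congr 1; ring
    rw [← h, hsq]
  have hey : y = (e2 ^ 2 + (e2 ^ 2)⁻¹) / 2 := by
    have h := cosh_arcoshR hy
    rw [Real.cosh_eq, Real.exp_neg] at h
    have hsq : e2 ^ 2 = Real.exp (arcoshR y) := by
      rw [he2d, show dH b c = arcoshR y from rfl, sq, ← Real.exp_add]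
      congr 1; ring
    rw [← h, hsq]
  have hez : z = (e3 ^ 2 + (e3 ^ 2)⁻¹) / 2 := by
    have h := cosh_arcoshR hz
    rw [Real.cosh_eq, Real.exp_neg] at h
    have hsq : e3 ^ 2 = Real.exp (arcoshR z) := by
      rw [he3d, show dH c a = arcoshR z from rfl, sq, ← Real.exp_add]
      congr 1; ring
    rw [← h, hsq]
  -- tanh rewrites
  have ht1 : Real.tanh ((dH a b + dH b c + dH c a) / 4)
      = (e1 * e2 * e3 - 1) / (e1 * e2 * e3 + 1) := by
    rw [tanh_eq_exp]
    have h : Real.exp ((dH a b + dH b c + dH c a) / 4) ^ 2 = e1 * e2 * e3 := by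
      rw [he1d, he2d, he3d, ← Real.exp_add, ← Real.exp_add, sq, ← Real.exp_add]
      congr 1; ring
    rw [h]
  have ht2 : Real.tanh ((-dH a b + dH b c + dH c a) / 4)
      = (e2 * e3 - e1) / (e2 * e3 + e1) := by
    rw [tanh_eq_exp]
    have h : Real.exp ((-dH a b + dH b c + dH c a) / 4) ^ 2 = e1⁻¹ * (e2 * e3) := by
      rw [he1d, ← Real.exp_neg, he2d, he3d, ← Real.exp_add, ← Real.exp_add, sq,
        ← Real.exp_add]
      congr 1; ring
    rw [h, div_eq_div_iff (by positivity) (by positivity)]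
    field_simp
  have ht3 : Real.tanh ((dH a b - dH b c + dH c a) / 4)
      = (e1 * e3 - e2) / (e1 * e3 + e2) := by
    rw [tanh_eq_exp]
    have h : Real.exp ((dH a b - dH b c + dH c a) / 4) ^ 2 = e2⁻¹ * (e1 * e3) := by
      rw [he2d, ← Real.exp_neg, he1d, he3d, ← Real.exp_add, ← Real.exp_add, sq,
        ← Real.exp_add]
      congr 1; ring
    rw [h, div_eq_div_iff (by positivity) (by positivity)]
    field_simp
  have ht4 : Real.tanh ((dH a b + dH b c - dH c a) / 4)
      = (e1 * e2 - e3) / (e1 * e2 + e3) := by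
    rw [tanh_eq_exp]
    have h : Real.exp ((dH a b + dH b c - dH c a) / 4) ^ 2 = e3⁻¹ * (e1 * e2) := by
      rw [he3d, ← Real.exp_neg, he1d, he2d, ← Real.exp_add, ← Real.exp_add, sq,
        ← Real.exp_add]
      congr 1; ring
    rw [h, div_eq_div_iff (by positivity) (by positivity)]
    field_simp
  have hgoal1 : triArea a b c = 2 * Real.arctan (D / (x + y + z + 1)) := rfl
  rw [hgoal1, ht1, ht2, ht3, ht4, div_mul_div_comm, div_mul_div_comm, div_mul_div_comm]
  have hD2 : D ^ 2 = 1 + 2 * x * y * z - x ^ 2 - y ^ 2 - z ^ 2 := by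
    have h := gram_identity a b c
    obtain ⟨haa, _⟩ := ha; obtain ⟨hbb, _⟩ := hb; obtain ⟨hcc, _⟩ := hc
    rw [haa, hbb, hcc] at h
    rw [← hxd, ← hyd, ← hzd, ← hDd] at h
    linear_combination h
  clear_value x y z D e1 e2 e3
  clear hgoal1 ht1 ht2 ht3 ht4 hxd hyd hzd hDd he1d he2d he3d
  set N := (e1 * e2 * e3 - 1) * (e2 * e3 - e1) * (e1 * e3 - e2) * (e1 * e2 - e3) with hNd
  set Dn := (e1 * e2 * e3 + 1) * (e2 * e3 + e1) * (e1 * e3 + e2) * (e1 * e2 + e3) with hDnd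
  clear_value N Dn
  have hDn : 0 < Dn := by rw [hDnd]; positivity
  have hMaster : 4 * N * Dn * (x + y + z + 1) ^ 2 = D ^ 2 * (Dn - N) ^ 2 := by
    rw [hD2, hNd, hDnd]
    exact master e1 e2 e3 he1 he2 he3 x y z hex hey hez
  have hNDnn : 0 ≤ N * Dn := by
    nlinarith [hMaster, sq_nonneg (D * (Dn - N)), mul_pos hQ hQ]
  have hN : 0 ≤ N := by nlinarith [hNDnn, hDn]
  -- N < Dn
  have A1 : |e1 * e2 * e3 - 1| < e1 * e2 * e3 + 1 :=
    abs_lt.mpr ⟨by nlinarith [mul_pos (mul_pos he1 he2) he3], by nlinarith⟩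
  have A2 : |e2 * e3 - e1| < e2 * e3 + e1 :=
    abs_lt.mpr ⟨by nlinarith [mul_pos he2 he3], by nlinarith⟩
  have A3 : |e1 * e3 - e2| < e1 * e3 + e2 :=
    abs_lt.mpr ⟨by nlinarith [mul_pos he1 he3], by nlinarith⟩
  have A4 : |e1 * e2 - e3| < e1 * e2 + e3 :=
    abs_lt.mpr ⟨by nlinarith [mul_pos he1 he2], by nlinarith⟩
  have hNltDn : N < Dn := by
    have B1 : |e1 * e2 * e3 - 1| * |e2 * e3 - e1|
        < (e1 * e2 * e3 + 1) * (e2 * e3 + e1) :=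
      mul_lt_mul'' A1 A2 (abs_nonneg _) (abs_nonneg _)
    have B2 : |e1 * e2 * e3 - 1| * |e2 * e3 - e1| * |e1 * e3 - e2|
        < (e1 * e2 * e3 + 1) * (e2 * e3 + e1) * (e1 * e3 + e2) :=
      mul_lt_mul'' B1 A3 (by positivity) (abs_nonneg _)
    have B3 : |e1 * e2 * e3 - 1| * |e2 * e3 - e1| * |e1 * e3 - e2| * |e1 * e2 - e3|
        < (e1 * e2 * e3 + 1) * (e2 * e3 + e1) * (e1 * e3 + e2) * (e1 * e2 + e3) :=
      mul_lt_mul'' B2 A4 (by positivity) (abs_nonneg _)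
    calc N ≤ |N| := le_abs_self N
    _ = |e1 * e2 * e3 - 1| * |e2 * e3 - e1| * |e1 * e3 - e2| * |e1 * e2 - e3| := by
        rw [hNd, abs_mul, abs_mul, abs_mul]
    _ < Dn := by rw [hDnd]; exact B3
  have hNDiv : 0 ≤ N / Dn := div_nonneg hN hDn.le
  set r := Real.sqrt (N / Dn) with hrd
  have hr0 : 0 ≤ r := Real.sqrt_nonneg _
  have hr2 : r ^ 2 = N / Dn := Real.sq_sqrt hNDiv
  have hdivlt : N / Dn < 1 := (div_lt_one hDn).mpr hNltDn
  have hrlt : r < 1 := by nlinarith [hr2, hdivlt, hr0]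
  have hrDn : Real.sqrt (N * Dn) = r * Dn := by
    have hh : N * Dn = N / Dn * Dn ^ 2 := by field_simp
    rw [hh, Real.sqrt_mul hNDiv, Real.sqrt_sq hDn.le]
  have hsq : 2 * Real.sqrt (N * Dn) = |D| * (Dn - N) / (x + y + z + 1) := by
    have esq : (2 * Real.sqrt (N * Dn)) ^ 2
        = (|D| * (Dn - N) / (x + y + z + 1)) ^ 2 := by
      rw [mul_pow, Real.sq_sqrt hNDnn, div_pow, mul_pow, sq_abs,
        eq_div_iff (by positivity)]
      linear_combination hMaster
    have n1 : (0:ℝ) ≤ 2 * Real.sqrt (N * Dn) := by positivity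
    have n2 : (0:ℝ) ≤ |D| * (Dn - N) / (x + y + z + 1) :=
      div_nonneg (mul_nonneg (abs_nonneg _) (by linarith)) hQ.le
    have := congrArg Real.sqrt esq
    rwa [Real.sqrt_sq n1, Real.sqrt_sq n2] at this
  have h4 : Real.arctan r < π / 4 := by
    rw [← Real.arctan_one]; exact Real.arctan_strictMono hrlt
  have h0 : 0 ≤ Real.arctan r := by
    rw [← Real.arctan_zero]; exact Real.arctan_strictMono.monotone hr0
  have htan : Real.tan (2 * Real.arctan r) = |D| / (x + y + z + 1) := by
    rw [Real.tan_two_mul, Real.tan_arctan, hr2]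
    have key : 2 * (r * Dn) * (x + y + z + 1) = |D| * (Dn - N) := by
      have h' := hsq
      rw [hrDn] at h'
      rw [eq_div_iff hQ.ne'] at h'
      linarith [h']
    rw [show 1 - N / Dn = (Dn - N) / Dn from by field_simp, div_div_eq_mul_div,
      div_eq_div_iff (by linarith : (0:ℝ) < Dn - N).ne' hQ.ne']
    linarith [key]
  rw [abs_mul, abs_two, abs_arctan, abs_div, abs_of_pos hQ]
  rw [← htan, Real.arctan_tan (by linarith [Real.pi_pos]) (by linarith)]
  ring
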